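/- arXiv:1910.14543 — 3 statements merged into one kernel-verified Lean document; each statement's English description precedes it below -/
import Mathlib

section
/- Let W and r be symmetric n×n real matrices and a_1,...,a_n positive reals. Define v̄_{ij} = r_{ij}·(a_j - a_i)/(a_j + a_i) and the operator (T y)_i = Σ_j [r_{ij}(y_i - y_j) - v̄_{ij}(y_i + y_j)] w_{ij}. Then T is self-adjoint with respect to the inner product ⟨y,z⟩ = Σ_i a_i y_i z_i. -/
/-!
Each summand of `T y i` is linear in `(y i, y j)`, so `T y i = ∑ j, (P i j * y i + Q i j * y j)`.
The `P` part contributes `∑ i, a i * (∑ j, P i j) * y i * z i`, symmetric in `y, z`; the `Q` part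
is symmetric as soon as `a i * Q i j` is. Here `Q i j = -(1 + v i j) * r i j * W i j` with
`v i j = (a j - a i) / (a j + a i)`, and `a i * (1 + v i j) = 2 * a i * a j / (a i + a j)`.
-/

open Finset

theorem sum_mul_kernel_apply_comm {ι R : Type*} [Fintype ι] [CommRing R]
    (a : ι → R) (P Q : ι → ι → R) (hQ : ∀ i j, a i * Q i j = a j * Q j i) (y z : ι → R) :
    ∑ i, a i * (∑ j, (P i j * y i + Q i j * y j)) * z i =
      ∑ i, a i * y i * ∑ j, (P i j * z i + Q i j * z j) := by
  simp only [mul_sum, sum_mul, mul_add, add_mul, sum_add_distrib]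
  congr 1
  · exact sum_congr rfl fun i _ => sum_congr rfl fun j _ => by ring
  · rw [sum_comm]
    refine sum_congr rfl fun i _ => sum_congr rfl fun j _ => ?_
    linear_combination (y i * z j) * hQ j i

theorem mul_one_add_sub_div_add_comm {K : Type*} [Field K] {b c : K} (h : b + c ≠ 0) :
    b * (1 + (c - b) / (c + b)) = c * (1 + (b - c) / (b + c)) := by
  rw [add_comm c b]
  field_simp
  ring

theorem stmt_1 (n : ℕ) (W r : Matrix (Fin n) (Fin n) ℝ) (hW : W.IsSymm) (hr : r.IsSymm)
    (a : Fin n → ℝ) (ha : ∀ i, 0 < a i)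
    (T : (Fin n → ℝ) → (Fin n → ℝ))
    (hT : ∀ y i, T y i =
      ∑ j, (r i j * (y i - y j) - (r i j * ((a j - a i) / (a j + a i))) * (y i + y j)) * W i j)
    (y z : Fin n → ℝ) :
    ∑ i, a i * T y i * z i = ∑ i, a i * y i * T z i := by
  set v : Fin n → Fin n → ℝ := fun i j => (a j - a i) / (a j + a i)
  have hT' : ∀ y i, T y i = ∑ j, ((1 - v i j) * r i j * W i j * y i
      + -((1 + v i j) * r i j * W i j) * y j) := fun y i => by
    rw [hT]
    exact sum_congr rfl fun j _ => by ring
  simp only [hT']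
  refine sum_mul_kernel_apply_comm a _ _ (fun i j => ?_) y z
  have hv : a i * (1 + v i j) = a j * (1 + v j i) :=
    mul_one_add_sub_div_add_comm (add_pos (ha i) (ha j)).ne'
  rw [hr.apply i j, hW.apply i j]
  linear_combination (-(r i j * W i j)) * hv
end

section
/- Let w̃ be a symmetric n×n real matrix with nonnegative entries, a_i > 0, c > 0, and let D be a diagonal matrix with strictly positive diagonal entries d_i. Define (T y)_i = Σ_j (a_i y_i - a_j y_j) w̃_{ij}. Then the operator D^{-1/2} T D^{-1/2} is self-adjoint and positive semi-definite with respect to the inner product ⟨u,v⟩_X = Σ_i c a_i u_i v_i. -/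
/-!
With `s i = (√(d i))⁻¹`, the form `⟨S y, z⟩_X` equals `c · (a s z)ᵀ L (a s y)`, where
`L = diag(∑ⱼ w̃ᵢⱼ) - w̃` is the weighted graph Laplacian of `w̃`. For symmetric `w̃`, `L` is
symmetric, and `2 fᵀ L f = ∑ᵢⱼ w̃ᵢⱼ (fᵢ - fⱼ)²`, which is nonnegative when `w̃ ≥ 0`.
-/

open Matrix Finset

namespace Matrix

variable {ι R : Type*} [Fintype ι] [DecidableEq ι] [CommRing R]

def weightedLaplacian (w : Matrix ι ι R) : Matrix ι ι R :=
  diagonal (fun i => ∑ j, w i j) - w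

lemma weightedLaplacian_mulVec_apply (w : Matrix ι ι R) (f : ι → R) (i : ι) :
    (w.weightedLaplacian *ᵥ f) i = ∑ j, (f i - f j) * w i j := by
  rw [weightedLaplacian, sub_mulVec, Pi.sub_apply, mulVec_diagonal, mulVec, dotProduct, sum_mul,
    ← sum_sub_distrib]
  exact sum_congr rfl fun j _ => by ring

lemma IsSymm.weightedLaplacian {w : Matrix ι ι R} (hw : w.IsSymm) :
    w.weightedLaplacian.IsSymm :=
  (isSymm_diagonal _).sub hw

lemma IsSymm.two_mul_dotProduct_weightedLaplacian_mulVec {w : Matrix ι ι R} (hw : w.IsSymm)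
    (f g : ι → R) :
    2 * (g ⬝ᵥ w.weightedLaplacian *ᵥ f) = ∑ i, ∑ j, (g i - g j) * (f i - f j) * w i j := by
  have hswap : ∑ i, ∑ j, g i * (f i - f j) * w i j = ∑ i, ∑ j, g j * (f j - f i) * w i j := by
    rw [sum_comm]
    exact sum_congr rfl fun i _ => sum_congr rfl fun j _ => by rw [hw.apply i j]
  have hform : g ⬝ᵥ w.weightedLaplacian *ᵥ f = ∑ i, ∑ j, g i * (f i - f j) * w i j := by
    simp only [dotProduct, weightedLaplacian_mulVec_apply, mul_sum, mul_assoc]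
  rw [hform, two_mul]
  nth_rw 2 [hswap]
  rw [← sum_add_distrib]
  exact sum_congr rfl fun i _ => by rw [← sum_add_distrib]; exact sum_congr rfl fun j _ => by ring

lemma posSemidef_weightedLaplacian [LinearOrder R] [IsStrictOrderedRing R] [StarRing R]
    [TrivialStar R] {w : Matrix ι ι R} (hw : w.IsSymm) (hw0 : ∀ i j, 0 ≤ w i j) :
    w.weightedLaplacian.PosSemidef := by
  refine .of_dotProduct_mulVec_nonneg ?_ fun f => ?_
  · exact isHermitian_iff_isSymm.mpr hw.weightedLaplacian
  · rw [star_trivial]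
    have hsq : 0 ≤ 2 * (f ⬝ᵥ w.weightedLaplacian *ᵥ f) := by
      rw [hw.two_mul_dotProduct_weightedLaplacian_mulVec]
      exact sum_nonneg fun i _ => sum_nonneg fun j _ => mul_nonneg (mul_self_nonneg _) (hw0 i j)
    exact nonneg_of_mul_nonneg_right hsq two_pos

end Matrix

theorem stmt_5_general (n : ℕ) (w : Matrix (Fin n) (Fin n) ℝ) (hw : w.IsSymm)
    (hw0 : ∀ i j, 0 ≤ w i j)
    (a : Fin n → ℝ) (c : ℝ) (hc : 0 < c)
    (d : Fin n → ℝ)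
    (T : (Fin n → ℝ) → (Fin n → ℝ))
    (hT : ∀ y i, T y i = ∑ j, (a i * y i - a j * y j) * w i j)
    (S : (Fin n → ℝ) → (Fin n → ℝ))
    (hS : ∀ y i, S y i = (Real.sqrt (d i))⁻¹ * T (fun j => (Real.sqrt (d j))⁻¹ * y j) i) :
    (∀ y z : Fin n → ℝ, ∑ i, c * a i * S y i * z i = ∑ i, c * a i * y i * S z i) ∧
    (∀ y : Fin n → ℝ, 0 ≤ ∑ i, c * a i * y i * S y i) := by
  set s : Fin n → ℝ := fun i => (Real.sqrt (d i))⁻¹ with hs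
  have hform : ∀ y z : Fin n → ℝ, ∑ i, c * a i * S y i * z i
      = c * ((a * s * z) ⬝ᵥ w.weightedLaplacian *ᵥ (a * s * y)) := by
    intro y z
    simp only [hS, hT, dotProduct, weightedLaplacian_mulVec_apply, mul_sum, sum_mul, Pi.mul_apply, hs]
    exact sum_congr rfl fun i _ => sum_congr rfl fun j _ => by ring
  have hswap : ∀ y z : Fin n → ℝ, ∑ i, c * a i * y i * S z i = ∑ i, c * a i * S z i * y i :=
    fun y z => sum_congr rfl fun i _ => by ring
  refine ⟨fun y z => ?_, fun y => ?_⟩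
  · rw [hswap, hform, hform, ← dotProduct_transpose_mulVec, hw.weightedLaplacian.eq]
  · rw [hswap, hform]
    have hpsd := (posSemidef_weightedLaplacian hw hw0).dotProduct_mulVec_nonneg (a * s * y)
    rw [star_trivial] at hpsd
    exact mul_nonneg hc.le hpsd

theorem stmt_5 (n : ℕ) (w : Matrix (Fin n) (Fin n) ℝ) (hw : w.IsSymm)
    (hw0 : ∀ i j, 0 ≤ w i j)
    (a : Fin n → ℝ) (ha : ∀ i, 0 < a i) (c : ℝ) (hc : 0 < c)
    (d : Fin n → ℝ) (hd : ∀ i, 0 < d i)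
    (T : (Fin n → ℝ) → (Fin n → ℝ))
    (hT : ∀ y i, T y i = ∑ j, (a i * y i - a j * y j) * w i j)
    (S : (Fin n → ℝ) → (Fin n → ℝ))
    (hS : ∀ y i, S y i = (Real.sqrt (d i))⁻¹ * T (fun j => (Real.sqrt (d j))⁻¹ * y j) i) :
    (∀ y z : Fin n → ℝ, ∑ i, c * a i * S y i * z i = ∑ i, c * a i * y i * S z i) ∧
    (∀ y : Fin n → ℝ, 0 ≤ ∑ i, c * a i * y i * S y i) :=
  stmt_5_general n w hw hw0 a c hc d T hT S hS
end

section
/- Let a : Fin n → ℝ (n ≥ 3) be a function taking at most two distinct values. Then for every cyclic sequence of indices i_1, i_2, ..., i_l, i_1 (with l ≥ 3), one has ∏_{k=1}^{l} (1 + a_{i_k} − a_{i_{k+1}}) = ∏_{k=1}^{l} (1 + a_{i_{k+1}} − a_{i_k}), where indices are taken cyclically (i_{l+1} = i_1). -/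
/-! The product depends only on the multiset of transitions `(s k, s (σ k))`. For a sequence with
two values `u ≠ v` permuted by `σ`, counting the `k` with `s k = u` by rows and by columns of the
transition table shows that `u → v` and `v → u` transitions are equally frequent, so swapping every
transition leaves the multiset, hence the product, unchanged. -/

open Finset

section Transitions

variable {ι α : Type*} [Fintype ι] [DecidableEq α] (σ : Equiv.Perm ι) (s : ι → α)

theorem card_transitions_comm_of_forall_eq_or_eq {u v : α} (huv : u ≠ v)
    (hs : ∀ k, s k = u ∨ s k = v) :
    #{k | s k = u ∧ s (σ k) = v} = #{k | s k = v ∧ s (σ k) = u} := by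
  classical
  have hrow : #{k | s k = u} = #{k | s k = u ∧ s (σ k) = u} + #{k | s k = u ∧ s (σ k) = v} := by
    rw [← card_union_of_disjoint]
    · congr 1
      ext k
      have := hs (σ k)
      simp only [mem_filter, mem_univ, true_and, mem_union]
      tauto
    · rw [disjoint_filter]; rintro k - ⟨-, h⟩ ⟨-, h'⟩; exact huv (h.symm.trans h')
  have hcol : #{k | s (σ k) = u} = #{k | s k = u ∧ s (σ k) = u} + #{k | s k = v ∧ s (σ k) = u} := by
    rw [← card_union_of_disjoint]
    · congr 1
      ext k
      have := hs k
      simp only [mem_filter, mem_univ, true_and, mem_union]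
      tauto
    · rw [disjoint_filter]; rintro k - ⟨h, -⟩ ⟨h', -⟩; exact huv (h.symm.trans h')
  have hperm : #{k | s (σ k) = u} = #{k | s k = u} := by
    rw [card_filter, card_filter]; exact Equiv.sum_comp σ (fun k => if s k = u then 1 else 0)
  omega

theorem card_transitions_comm (hs : #(univ.image s) ≤ 2) (u v : α) :
    #{k | s k = u ∧ s (σ k) = v} = #{k | s k = v ∧ s (σ k) = u} := by
  rcases eq_or_ne u v with rfl | huv
  · rfl
  by_cases hmem : u ∈ univ.image s ∧ v ∈ univ.image s
  · have himage : univ.image s = {u, v} :=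
      (eq_of_subset_of_card_le (by simp [insert_subset_iff, hmem]) (by simpa [card_pair huv])).symm
    refine card_transitions_comm_of_forall_eq_or_eq σ s huv fun k => ?_
    simpa [himage] using mem_image_of_mem s (mem_univ k)
  · have hempty : ∀ k, ¬(s k = u ∧ s (σ k) = v) ∧ ¬(s k = v ∧ s (σ k) = u) := by
      simp only [mem_image, mem_univ, true_and, not_and_or, not_exists] at hmem
      intro k; rcases hmem with h | h <;> simp [h]
    simp [filter_false_of_mem fun k _ => (hempty k).1, filter_false_of_mem fun k _ => (hempty k).2]

end Transitions

theorem Multiset.map_swap_eq_self {α : Type*} [DecidableEq α] {m : Multiset (α × α)}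
    (h : ∀ p, m.count p.swap = m.count p) : m.map Prod.swap = m := by
  ext p
  rw [← Prod.swap_swap p, count_map_eq_count' _ _ Prod.swap_injective, ← h, Prod.swap_swap]

theorem prod_apply_perm_comm_of_card_image_le_two {ι α M : Type*} [Fintype ι] [DecidableEq α]
    [CommMonoid M] (σ : Equiv.Perm ι) (s : ι → α) (hs : #(univ.image s) ≤ 2) (f : α → α → M) :
    ∏ k, f (s k) (s (σ k)) = ∏ k, f (s (σ k)) (s k) := by
  set m := univ.val.map fun k => (s k, s (σ k))
  have hm : m.map Prod.swap = m := Multiset.map_swap_eq_self fun p => by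
    have := card_transitions_comm σ s hs p.2 p.1
    simp only [m, Multiset.count_map, Prod.ext_iff, Prod.fst_swap, Prod.snd_swap, ← filter_val,
      card_val, eq_comm (a := p.1), eq_comm (a := p.2)]
    exact this
  calc ∏ k, f (s k) (s (σ k)) = (m.map fun p => f p.1 p.2).prod := by
        rw [prod_eq_multiset_prod, Multiset.map_map]; rfl
    _ = ((m.map Prod.swap).map fun p => f p.1 p.2).prod := by rw [hm]
    _ = ∏ k, f (s (σ k)) (s k) := by
        rw [prod_eq_multiset_prod, Multiset.map_map, Multiset.map_map]; rfl

theorem stmt_9 (n : ℕ) (a : Fin n → ℝ)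
    (ha : (Finset.univ.image a).card ≤ 2)
    (l : ℕ) (hl : 3 ≤ l) (idx : Fin l → Fin n) :
    ∏ k : Fin l, (1 + a (idx k) - a (idx (k + ⟨1, by omega⟩)))
      = ∏ k : Fin l, (1 + a (idx (k + ⟨1, by omega⟩)) - a (idx k)) := by
  have : NeZero l := ⟨by omega⟩
  have himage : #(univ.image (a ∘ idx)) ≤ 2 :=
    (card_le_card (image_subset_iff.2 fun k _ => mem_image_of_mem a (mem_univ (idx k)))).trans ha
  exact prod_apply_perm_comm_of_card_image_le_two (Equiv.addRight ⟨1, by omega⟩) (a ∘ idx) himage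
    fun u v => 1 + u - v
end
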